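/- The language {aⁿ b^(2n) : n ∈ ℕ} over the alphabet {a, b, a⁻¹, b⁻¹} is not a visibly pushdown language for any partition of the alphabet into call, internal, and response letters. -/

import Mathlib

inductive VKind | call | internal | response
deriving DecidableEq

/-- A (nondeterministic) visibly pushdown automaton over alphabet `A`
partitioned by `kind` into call, internal and response letters. -/
structure VPA (A : Type) (kind : A → VKind) where
  Q : Type
  Γ : Type
  [finQ : Fintype Q]
  [finΓ : Fintype Γ]
  init : Q
  accept : Set Q
  /-- transitions on call letters: push one symbol, do not inspect the stack -/
  δc : Q → A → Set (Q × Γ)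
  /-- transitions on internal letters: do not inspect or modify the stack -/
  δi : Q → A → Set Q
  /-- transitions on response letters: pop the topmost stack symbol -/
  δr : Q → A → Γ → Set Q
  /-- transitions on response letters read on the empty stack (bottom symbol) -/
  δb : Q → A → Set Q

namespace VPA

variable {A : Type} {kind : A → VKind}

inductive Steps (M : VPA A kind) : M.Q × List M.Γ → List A → M.Q × List M.Γ → Prop
  | nil (c) : Steps M c [] c
  | call {q s a q' γ w c} : kind a = .call → (q', γ) ∈ M.δc q a →
      Steps M (q', γ :: s) w c → Steps M (q, s) (a :: w) c
  | internal {q s a q' w c} : kind a = .internal → q' ∈ M.δi q a →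
      Steps M (q', s) w c → Steps M (q, s) (a :: w) c
  | pop {q γ s a q' w c} : kind a = .response → q' ∈ M.δr q a γ →
      Steps M (q', s) w c → Steps M (q, γ :: s) (a :: w) c
  | popEmpty {q a q' w c} : kind a = .response → q' ∈ M.δb q a →
      Steps M (q', []) w c → Steps M (q, []) (a :: w) c

/-- A VPA accepts a word if reading it from the initial state with empty stack
can end in an accepting state (with arbitrary stack contents). -/
def Accepts (M : VPA A kind) (w : List A) : Prop :=
  ∃ c : M.Q × List M.Γ, M.Steps (M.init, []) w c ∧ c.1 ∈ M.accept

end VPA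

/-- `L` is a visibly pushdown language over the partition `kind`. -/
def IsVPL {A : Type} (kind : A → VKind) (L : Set (List A)) : Prop :=
  ∃ M : VPA A kind, L = {w | M.Accepts w}

inductive F2L | a | b | ai | bi
deriving DecidableEq

/-
Reading a response letter pops the stack, and reading a call letter pushes one symbol. Hence
after aⁿbⁿ the stack is empty whenever b is a response letter, and then the continuation of a run
depends only on the set of states reachable with empty stack. If b is not a response letter, a
suffix made of b's never inspects the stack, so again only the set of states reachable on the
prefix matters. In both cases a finite-state summary of the prefixes aⁿbⁿ decides acceptance of
aⁿbⁿ·bᵏ, so two distinct prefixes aⁿbⁿ and aᵐbᵐ share a summary. This is absurd, as aⁿbⁿ·bⁿ lies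
in the language while aᵐbᵐ·bⁿ does not.
-/

namespace VPA

variable {A : Type} {kind : A → VKind} {M : VPA A kind}

def AcceptsFrom (M : VPA A kind) (q : M.Q) (w : List A) : Prop :=
  ∃ c : M.Q × List M.Γ, M.Steps (q, []) w c ∧ c.1 ∈ M.accept

theorem Steps.append {c₁ c₂ c₃ : M.Q × List M.Γ} {u v : List A}
    (h : M.Steps c₁ u c₂) (h' : M.Steps c₂ v c₃) : M.Steps c₁ (u ++ v) c₃ := by
  induction h with
  | nil => exact h'
  | call hk ht _ ih => exact .call hk ht (ih h')
  | internal hk ht _ ih => exact .internal hk ht (ih h')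
  | pop hk ht _ ih => exact .pop hk ht (ih h')
  | popEmpty hk ht _ ih => exact .popEmpty hk ht (ih h')

theorem Steps.of_append {c₁ c₃ : M.Q × List M.Γ} {u v : List A}
    (h : M.Steps c₁ (u ++ v) c₃) : ∃ c₂, M.Steps c₁ u c₂ ∧ M.Steps c₂ v c₃ := by
  induction u generalizing c₁ with
  | nil => exact ⟨c₁, .nil _, h⟩
  | cons a u ih =>
    cases h with
    | call hk ht h =>
      obtain ⟨c₂, hu, hv⟩ := ih h; exact ⟨c₂, .call hk ht hu, hv⟩
    | internal hk ht h =>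
      obtain ⟨c₂, hu, hv⟩ := ih h; exact ⟨c₂, .internal hk ht hu, hv⟩
    | pop hk ht h =>
      obtain ⟨c₂, hu, hv⟩ := ih h; exact ⟨c₂, .pop hk ht hu, hv⟩
    | popEmpty hk ht h =>
      obtain ⟨c₂, hu, hv⟩ := ih h; exact ⟨c₂, .popEmpty hk ht hu, hv⟩

theorem Steps.length_stack_le {c c' : M.Q × List M.Γ} {w : List A} (h : M.Steps c w c') :
    c'.2.length ≤ c.2.length + w.countP (kind · = .call) := by
  induction h with
  | nil => simp
  | call hk _ _ ih | internal hk _ _ ih | pop hk _ _ ih | popEmpty hk _ _ ih =>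
    simp only [List.countP_cons, hk, List.length_cons, decide_true, decide_false, reduceCtorEq,
      if_true, if_false] at ih ⊢
    omega

theorem Steps.stack_eq_drop {q : M.Q} {s : List M.Γ} {c : M.Q × List M.Γ} {w : List A}
    (hw : ∀ x ∈ w, kind x = .response) (h : M.Steps (q, s) w c) : c.2 = s.drop w.length := by
  induction w generalizing q s with
  | nil => cases h; rfl
  | cons a w ih =>
    have hw' : ∀ x ∈ w, kind x = .response := fun x hx => hw x (List.mem_cons_of_mem _ hx)
    cases h with
    | call hk => simp [hw a List.mem_cons_self] at hk
    | internal hk => simp [hw a List.mem_cons_self] at hk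
    | pop _ _ h => exact ih hw' h
    | popEmpty _ _ h => simpa using ih hw' h

theorem Steps.stack_eq_nil_of_append {q : M.Q} {c : M.Q × List M.Γ} {u v : List A}
    (hv : ∀ x ∈ v, kind x = .response) (huv : u.countP (kind · = .call) ≤ v.length)
    (h : M.Steps (q, []) (u ++ v) c) : c.2 = [] := by
  obtain ⟨c₂, hu, hv'⟩ := h.of_append
  have hlen := hu.length_stack_le
  rw [hv'.stack_eq_drop hv]
  simp only [List.length_nil, zero_add] at hlen
  exact List.drop_eq_nil_of_le (by omega)

theorem Steps.frame {q q' : M.Q} {s s' : List M.Γ} {w : List A}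
    (hw : ∀ x ∈ w, kind x ≠ .response) (h : M.Steps (q, s) w (q', s')) :
    ∃ t, s' = t ++ s ∧ ∀ s₂, M.Steps (q, s₂) w (q', t ++ s₂) := by
  induction w generalizing q s with
  | nil => cases h; exact ⟨[], rfl, fun _ => .nil _⟩
  | cons a w ih =>
    have hw' : ∀ x ∈ w, kind x ≠ .response := fun x hx => hw x (List.mem_cons_of_mem _ hx)
    cases h with
    | @call _ _ _ _ γ _ _ hk ht h =>
      obtain ⟨t, rfl, ht'⟩ := ih hw' h
      exact ⟨t ++ [γ], by simp, fun s₂ => .call hk ht (by simpa using ht' (γ :: s₂))⟩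
    | internal hk ht h =>
      obtain ⟨t, rfl, ht'⟩ := ih hw' h
      exact ⟨t, rfl, fun s₂ => .internal hk ht (ht' s₂)⟩
    | pop hk => exact absurd hk (hw a List.mem_cons_self)
    | popEmpty hk => exact absurd hk (hw a List.mem_cons_self)

theorem accepts_append_iff_of_stack_eq_nil {u : List A}
    (hu : ∀ c, M.Steps (M.init, []) u c → c.2 = []) (w : List A) :
    M.Accepts (u ++ w) ↔ ∃ q, M.Steps (M.init, []) u (q, []) ∧ M.AcceptsFrom q w := by
  constructor
  · rintro ⟨c, h, hc⟩
    obtain ⟨⟨q, s⟩, hu', hw⟩ := h.of_append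
    obtain rfl : s = [] := hu _ hu'
    exact ⟨q, hu', c, hw, hc⟩
  · rintro ⟨q, hu', c, hw, hc⟩
    exact ⟨c, hu'.append hw, hc⟩

theorem accepts_append_iff_of_forall_ne_response {u w : List A}
    (hw : ∀ x ∈ w, kind x ≠ .response) :
    M.Accepts (u ++ w) ↔ ∃ q, (∃ s, M.Steps (M.init, []) u (q, s)) ∧ M.AcceptsFrom q w := by
  constructor
  · rintro ⟨⟨q', s'⟩, h, hc⟩
    obtain ⟨⟨q, s⟩, hu, hw'⟩ := h.of_append
    obtain ⟨t, -, ht⟩ := hw'.frame hw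
    exact ⟨q, ⟨s, hu⟩, (q', t ++ []), ht [], hc⟩
  · rintro ⟨q, ⟨s, hu⟩, ⟨q', _⟩, hw', hc⟩
    obtain ⟨t, -, ht⟩ := hw'.frame hw
    exact ⟨(q', t ++ s), hu.append (ht s), hc⟩

theorem exists_ne_accepts_append_iff_of_stack_eq_nil (M : VPA A kind) (u : ℕ → List A)
    (hu : ∀ n c, M.Steps (M.init, []) (u n) c → c.2 = []) :
    ∃ n m, n ≠ m ∧ ∀ w, M.Accepts (u n ++ w) ↔ M.Accepts (u m ++ w) := by
  have := M.finQ
  obtain ⟨n, m, hnm, hS⟩ := Finite.exists_ne_map_eq_of_infinite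
    fun n => {q | M.Steps (M.init, []) (u n) (q, [])}
  refine ⟨n, m, hnm, fun w => ?_⟩
  simp only [accepts_append_iff_of_stack_eq_nil (hu _)]
  exact exists_congr fun q => and_congr_left' (Set.ext_iff.mp hS q)

theorem exists_ne_accepts_append_iff_of_forall_ne_response (M : VPA A kind) (u : ℕ → List A) :
    ∃ n m, n ≠ m ∧ ∀ w, (∀ x ∈ w, kind x ≠ .response) →
      (M.Accepts (u n ++ w) ↔ M.Accepts (u m ++ w)) := by
  have := M.finQ
  obtain ⟨n, m, hnm, hS⟩ := Finite.exists_ne_map_eq_of_infinite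
    fun n => {q | ∃ s, M.Steps (M.init, []) (u n) (q, s)}
  refine ⟨n, m, hnm, fun w hw => ?_⟩
  simp only [accepts_append_iff_of_forall_ne_response hw]
  exact exists_congr fun q => and_congr_left' (Set.ext_iff.mp hS q)

end VPA

theorem List.replicate_append_replicate_eq_iff {α : Type*} {a b : α} (hab : a ≠ b)
    {n m k l : ℕ} :
    replicate n a ++ replicate k b = replicate m a ++ replicate l b ↔ n = m ∧ k = l := by
  classical
  refine ⟨fun h => ?_, by rintro ⟨rfl, rfl⟩; rfl⟩
  have ha := congrArg (count a) h
  have hb := congrArg (count b) h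
  simp [count_replicate, hab, hab.symm] at ha hb
  exact ⟨ha, hb⟩

/-- The language {aⁿ b^(2n)} over the four-letter alphabet {a,b,a⁻¹,b⁻¹} is not
a visibly pushdown language for any partition of the alphabet. -/
theorem anb2n_not_VPL :
    ∀ kind : F2L → VKind,
      ¬ IsVPL kind {w : List F2L |
        ∃ n : ℕ, w = List.replicate n F2L.a ++ List.replicate (2 * n) F2L.b} := by
  rintro kind ⟨M, hM⟩
  let u n := List.replicate n F2L.a ++ List.replicate n F2L.b
  obtain ⟨n, m, hnm, hnm_equiv⟩ : ∃ n m, n ≠ m ∧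
      (M.Accepts (u n ++ List.replicate n .b) ↔ M.Accepts (u m ++ List.replicate n .b)) := by
    by_cases hb : kind F2L.b = .response
    · obtain ⟨n, m, hnm, h⟩ := M.exists_ne_accepts_append_iff_of_stack_eq_nil u fun n _ h =>
        h.stack_eq_nil_of_append (by simp [hb]) (List.countP_le_length.trans_eq (by simp))
      exact ⟨n, m, hnm, h _⟩
    · obtain ⟨n, m, hnm, h⟩ := M.exists_ne_accepts_append_iff_of_forall_ne_response u
      exact ⟨n, m, hnm, h _ (by simp [hb])⟩
  have hn : u n ++ List.replicate n .b ∈ {w | M.Accepts w} := by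
    rw [← hM]; exact ⟨n, by simp [u, two_mul]⟩
  have hm : u m ++ List.replicate n .b ∉ {w | M.Accepts w} := by
    rw [← hM]
    rintro ⟨j, hj⟩
    rw [List.append_assoc, ← List.replicate_add,
      List.replicate_append_replicate_eq_iff (by decide)] at hj
    omega
  exact hm (hnm_equiv.mp hn)
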